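/- Let G be a finite graph, D a minimal dominating set of G, u ∈ D a vertex having at least one neighbor in D, and v ∈ priv(D, u). Let X be any maximal independent set of the induced subgraph G[priv(D,u) ∖ N[v]]. Then D' = (D ∖ {u}) ∪ X ∪ {v} is a dominating set of G, and every x ∈ X ∪ {v} satisfies N[x] ∩ D' = {x}, i.e., every vertex of X ∪ {v} is its own private neighbor with respect to D'. -/

import Mathlib

/-!
Every vertex `w` is still dominated after the flip. If `w` was dominated by some vertex of
`D` other than `u`, nothing changed; otherwise `w ∈ N[u]`, and either `w ∈ N[v]`, or `w` is a
private neighbor of `u` outside `N[v]`, in which case the maximality of `X` forces `w ∈ X` or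
`w` adjacent to `X`, or `w` is not private to `u` and hence has a second dominator in `D ∖ {u}`.
The new vertices are private to themselves because private neighbors of `u` see no vertex of
`D ∖ {u}`, `X` is independent, and `X` avoids `N[v]`.
-/

open Set

/-- The closed neighborhood `N[v]` of a vertex. -/
def closedNbhd {V : Type*} (G : SimpleGraph V) (v : V) : Set V :=
  insert v (G.neighborSet v)

/-- The closed neighborhood `N[S]` of a set of vertices. -/
def closedNbhdSet {V : Type*} (G : SimpleGraph V) (S : Set V) : Set V :=
  ⋃ v ∈ S, closedNbhd G v

/-- `D` is a dominating set of `G`. -/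
def IsDomSet {V : Type*} (G : SimpleGraph V) (D : Set V) : Prop :=
  ∀ w, w ∈ closedNbhdSet G D

/-- `D` is a minimal dominating set of `G`. -/
def IsMinDomSet {V : Type*} (G : SimpleGraph V) (D : Set V) : Prop :=
  IsDomSet G D ∧ ∀ D' ⊂ D, ¬ IsDomSet G D'

/-- The set `priv(D, u)` of private neighbors of `u` with respect to `D`:
vertices `v` with `N[v] ∩ D = {u}`. -/
def privSet {V : Type*} (G : SimpleGraph V) (D : Set V) (u : V) : Set V :=
  {v | closedNbhd G v ∩ D = {u}}

/-- `X` is a maximal independent set of the subgraph of `G` induced by `S`. -/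
def IsMaxIndepOn {V : Type*} (G : SimpleGraph V) (S X : Set V) : Prop :=
  X ⊆ S ∧ (∀ x ∈ X, ∀ y ∈ X, ¬ G.Adj x y) ∧
    ∀ X' ⊆ S, (∀ x ∈ X', ∀ y ∈ X', ¬ G.Adj x y) → X ⊆ X' → X' = X

section Flip

variable {V : Type*} {G : SimpleGraph V}

lemma mem_closedNbhd_iff {a b : V} : a ∈ closedNbhd G b ↔ a = b ∨ G.Adj b a := by
  simp [closedNbhd]

lemma mem_closedNbhd_comm {a b : V} : a ∈ closedNbhd G b ↔ b ∈ closedNbhd G a := by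
  simp only [mem_closedNbhd_iff, G.adj_comm, eq_comm]

lemma self_mem_closedNbhd (a : V) : a ∈ closedNbhd G a :=
  mem_closedNbhd_iff.mpr (Or.inl rfl)

lemma mem_closedNbhdSet_iff {S : Set V} {w : V} :
    w ∈ closedNbhdSet G S ↔ ∃ s ∈ S, w ∈ closedNbhd G s := by
  simp [closedNbhdSet]

lemma notMem_diff_of_mem_closedNbhd_of_mem_privSet {D : Set V} {u x y : V}
    (hx : x ∈ privSet G D u) (hy : y ∈ closedNbhd G x) : y ∉ D \ {u} := fun hyD =>
  hyD.2 (by rw [← show closedNbhd G x ∩ D = {u} from hx]; exact ⟨hy, hyD.1⟩)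

lemma exists_mem_diff_of_notMem_privSet {D : Set V} {u w : V} (hu : u ∈ D)
    (hwu : w ∈ closedNbhd G u) (hw : w ∉ privSet G D u) :
    ∃ d ∈ D \ {u}, w ∈ closedNbhd G d := by
  by_contra! h
  refine hw (eq_singleton_iff_unique_mem.mpr ⟨⟨mem_closedNbhd_comm.mp hwu, hu⟩, ?_⟩)
  rintro d ⟨hdw, hd⟩
  by_contra hdu
  exact h d ⟨hd, hdu⟩ (mem_closedNbhd_comm.mp hdw)

lemma IsMaxIndepOn.mem_or_exists_adj {S X : Set V} (hX : IsMaxIndepOn G S X) {w : V}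
    (hw : w ∈ S) : w ∈ X ∨ ∃ x ∈ X, G.Adj x w := by
  obtain ⟨hXS, hXind, hXmax⟩ := hX
  by_contra! h
  have hindep : ∀ a ∈ insert w X, ∀ b ∈ insert w X, ¬ G.Adj a b := by
    rintro a (rfl | ha) b (rfl | hb)
    · exact G.irrefl
    · exact fun hab => h.2 b hb hab.symm
    · exact h.2 a ha
    · exact hXind a ha b hb
  have hins := hXmax (insert w X) (insert_subset hw hXS) hindep (subset_insert w X)
  exact h.1 (hins ▸ mem_insert w X)

lemma isDomSet_diff_union_union {D X : Set V} (hD : IsDomSet G D) {u v : V} (hu : u ∈ D)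
    (hX : IsMaxIndepOn G (privSet G D u \ closedNbhd G v) X) :
    IsDomSet G ((D \ {u}) ∪ X ∪ {v}) := by
  intro w
  obtain ⟨d, hd, hwd⟩ := mem_closedNbhdSet_iff.mp (hD w)
  refine mem_closedNbhdSet_iff.mpr ?_
  rcases eq_or_ne u d with rfl | hdu
  swap
  · exact ⟨d, Or.inl (Or.inl ⟨hd, hdu.symm⟩), hwd⟩
  by_cases hwv : w ∈ closedNbhd G v
  · exact ⟨v, Or.inr rfl, hwv⟩
  by_cases hwp : w ∈ privSet G D u
  · rcases hX.mem_or_exists_adj ⟨hwp, hwv⟩ with hwX | ⟨x, hx, hxw⟩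
    · exact ⟨w, Or.inl (Or.inr hwX), self_mem_closedNbhd w⟩
    · exact ⟨x, Or.inl (Or.inr hx), mem_closedNbhd_iff.mpr (Or.inr hxw)⟩
  · obtain ⟨d', hd', hwd'⟩ := exists_mem_diff_of_notMem_privSet hu hwd hwp
    exact ⟨d', Or.inl (Or.inl hd'), hwd'⟩

lemma closedNbhd_inter_diff_union_union_eq_singleton {D X : Set V} {u v x : V}
    (hv : v ∈ privSet G D u) (hX : IsMaxIndepOn G (privSet G D u \ closedNbhd G v) X)
    (hx : x ∈ X ∪ {v}) :
    closedNbhd G x ∩ ((D \ {u}) ∪ X ∪ {v}) = {x} := by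
  obtain ⟨hXS, hXind, -⟩ := hX
  refine eq_singleton_iff_unique_mem.mpr ⟨⟨self_mem_closedNbhd x, ?_⟩, ?_⟩
  · rcases hx with hx | hx
    · exact Or.inl (Or.inr hx)
    · exact Or.inr hx
  rintro y ⟨hyx, (hyD | hyX) | rfl⟩
  · rcases hx with hx | rfl
    · exact absurd hyD (notMem_diff_of_mem_closedNbhd_of_mem_privSet (hXS hx).1 hyx)
    · exact absurd hyD (notMem_diff_of_mem_closedNbhd_of_mem_privSet hv hyx)
  · rcases hx with hx | rfl
    · exact (mem_closedNbhd_iff.mp hyx).resolve_right (hXind x hx y hyX)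
    · exact absurd hyx (hXS hyX).2
  · rcases hx with hx | rfl
    · exact absurd (mem_closedNbhd_comm.mp hyx) (hXS hx).2
    · rfl

end Flip

theorem stmt4_general {V : Type*} (G : SimpleGraph V)
    (D : Set V) (hD : IsMinDomSet G D)
    (u : V) (hu : u ∈ D)
    (v : V) (hv : v ∈ privSet G D u)
    (X : Set V) (hX : IsMaxIndepOn G (privSet G D u \ closedNbhd G v) X) :
    IsDomSet G ((D \ {u}) ∪ X ∪ {v}) ∧
    ∀ x ∈ X ∪ {v}, closedNbhd G x ∩ ((D \ {u}) ∪ X ∪ {v}) = {x} :=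
  ⟨isDomSet_diff_union_union hD.1 hu hX,
    fun _ hx => closedNbhd_inter_diff_union_union_eq_singleton hv hX hx⟩

/-- Flipping: if `D` is a minimal dominating set of `G`, `u ∈ D` has a neighbor in `D`,
`v ∈ priv(D,u)`, and `X` is a maximal independent set of `G[priv(D,u) ∖ N[v]]`, then
`D' = (D ∖ {u}) ∪ X ∪ {v}` is a dominating set of `G` and every vertex of `X ∪ {v}`
is its own private neighbor with respect to `D'`. -/
theorem stmt4 {V : Type*} [Fintype V] (G : SimpleGraph V)
    (D : Set V) (hD : IsMinDomSet G D)
    (u : V) (hu : u ∈ D) (hnb : ∃ w ∈ D, G.Adj u w)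
    (v : V) (hv : v ∈ privSet G D u)
    (X : Set V) (hX : IsMaxIndepOn G (privSet G D u \ closedNbhd G v) X) :
    IsDomSet G ((D \ {u}) ∪ X ∪ {v}) ∧
    ∀ x ∈ X ∪ {v}, closedNbhd G x ∩ ((D \ {u}) ∪ X ∪ {v}) = {x} :=
  stmt4_general G D hD u hu v hv X hX
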